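/- arXiv:2505.00489 — 2 statements merged into one kernel-verified Lean document; each statement's English description precedes it below -/
import Mathlib

section
/- If k[φ] a[e^{−ρ}] = n[x] a[y] k[θ] with ρ > 0, and u ≥ 0 is defined by cosh ρ = 2u+1, then e^{iθ} = e^{iφ} ((cosh(ρ/2) + e^{−2iφ} sinh(ρ/2)) / (cosh(ρ/2) + e^{2iφ} sinh(ρ/2)))^{1/2}, where the square root is the principal branch cut along (−∞,0] (this is well-defined since the quantity inside lies off (−∞,0]). -/
/-!
Comparing bottom rows, `e^{iθ}` is the phase of `w = e^{ρ/2} cos φ + i e^{-ρ/2} sin φ`, and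
`w = e^{iφ} N` for the numerator `N = cosh(ρ/2) + e^{-2iφ} sinh(ρ/2)`, whose conjugate is the
denominator. As `Re N ≥ cosh(ρ/2) - |sinh(ρ/2)| > 0`, the principal square root of
`N / conj N = (N / |N|)²` is `N / |N|`, and `e^{iφ} N / |N| = w / |w| = e^{iθ}`.
-/

open Matrix Complex

/-- `n[x] = (1 x; 0 1)` -/
noncomputable def nM (x : ℝ) : Matrix (Fin 2) (Fin 2) ℝ := !![1, x; 0, 1]

/-- `a[y] = (√y 0; 0 1/√y)` -/
noncomputable def aM (y : ℝ) : Matrix (Fin 2) (Fin 2) ℝ :=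
  !![Real.sqrt y, 0; 0, 1 / Real.sqrt y]

/-- `k[θ] = (cos θ sin θ; -sin θ cos θ)` -/
noncomputable def kM (θ : ℝ) : Matrix (Fin 2) (Fin 2) ℝ :=
  !![Real.cos θ, Real.sin θ; -Real.sin θ, Real.cos θ]

open ComplexConjugate

namespace Complex

theorem cpow_one_half_div_conj {z : ℂ} (hz : 0 < z.re) :
    (z / conj z) ^ ((1 : ℂ) / 2) = z / ‖z‖ := by
  have hz0 : z ≠ 0 := ne_zero_of_re_pos hz
  have hsq : z / conj z = (z / ‖z‖) ^ 2 := by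
    have hnorm : (‖z‖ : ℂ) ^ 2 = conj z * z := by rw [← mul_conj', mul_comm]
    rw [div_pow, hnorm]
    field_simp
  have hre : 0 < (z / ‖z‖).re := by
    rw [div_ofReal_re]
    exact div_pos hz (norm_pos_iff.2 hz0)
  rw [hsq, one_div, sq_cpow_two_inv hre]

theorem exp_mul_I_eq_div_norm {w : ℂ} {s θ : ℝ} (hw : w ≠ 0) (hs : 0 ≤ s)
    (h : w = s * exp (θ * I)) : exp (θ * I) = w / ‖w‖ := by
  have hs0 : (s : ℂ) ≠ 0 := by
    rintro hs0
    exact hw (by simpa [hs0] using h)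
  rw [h, norm_mul, norm_exp_ofReal_mul_I, mul_one, norm_real, Real.norm_of_nonneg hs]
  field_simp

theorem re_cosh_add_exp_mul_I_mul_sinh_pos (r α : ℝ) :
    0 < ((Real.cosh r : ℂ) + exp (α * I) * (Real.sinh r : ℂ)).re := by
  rw [add_re, ofReal_re, re_mul_ofReal, exp_ofReal_mul_I_re]
  have hcos : |Real.cos α * Real.sinh r| ≤ |Real.sinh r| := by
    rw [abs_mul]
    exact mul_le_of_le_one_left (abs_nonneg _) (Real.abs_cos_le_one α)
  have hsinh : |Real.sinh r| < Real.cosh r := by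
    rw [Real.abs_sinh, ← Real.cosh_abs]
    exact Real.sinh_lt_cosh _
  linarith [neg_abs_le (Real.cos α * Real.sinh r)]

theorem exp_mul_I_mul_cosh_add_exp_mul_I_mul_sinh (r φ : ℝ) :
    exp (φ * I) * ((Real.cosh r : ℂ) + exp (-2 * I * φ) * (Real.sinh r : ℂ)) =
      ((Real.exp r * Real.cos φ : ℝ) : ℂ) + ((Real.exp (-r) * Real.sin φ : ℝ) : ℂ) * I := by
  have h : exp (φ * I) * exp (-2 * I * φ) = exp (-φ * I) := by
    rw [← exp_add]
    ring_nf
  rw [mul_add, ← mul_assoc, h, exp_mul_I, exp_mul_I, cos_neg, sin_neg,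
    ← Real.cosh_add_sinh, ← Real.cosh_sub_sinh]
  push_cast
  ring

end Complex

/-- Left multiplication by `n[x]` fixes bottom rows; a bottom row `(b₀, b₁)` is encoded as
`b₁ - i b₀`. -/
theorem bottom_row_of_kM_mul_aM_eq {φ t x y θ : ℝ}
    (h : kM φ * aM t = nM x * aM y * kM θ) :
    ((Real.cos φ / √t : ℝ) : ℂ) + ((√t * Real.sin φ : ℝ) : ℂ) * I =
      ((√y)⁻¹ : ℝ) * exp (θ * I) := by
  have h10 : Real.sin φ * √t = (√y)⁻¹ * Real.sin θ := by
    simpa [kM, aM, nM, mul_apply, Fin.sum_univ_two] using congrFun₂ h 1 0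
  have h11 : Real.cos φ * (√t)⁻¹ = (√y)⁻¹ * Real.cos θ := by
    simpa [kM, aM, nM, mul_apply, Fin.sum_univ_two] using congrFun₂ h 1 1
  apply Complex.ext <;>
    simp only [add_re, add_im, mul_re, mul_im, ofReal_re, ofReal_im, I_re, I_im,
      exp_ofReal_mul_I_re, exp_ofReal_mul_I_im]
  · linear_combination h11
  · linear_combination h10

theorem stmt5_general (φ ρ x y θ : ℝ)
    (hEq : kM φ * aM (Real.exp (-ρ)) = nM x * aM y * kM θ) :
    Complex.exp ((θ : ℂ) * Complex.I) =
      Complex.exp ((φ : ℂ) * Complex.I) *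
        ((((Real.cosh (ρ / 2) : ℝ) : ℂ) +
            Complex.exp (-2 * Complex.I * (φ : ℂ)) * ((Real.sinh (ρ / 2) : ℝ) : ℂ)) /
          (((Real.cosh (ρ / 2) : ℝ) : ℂ) +
            Complex.exp (2 * Complex.I * (φ : ℂ)) * ((Real.sinh (ρ / 2) : ℝ) : ℂ))) ^
          ((1 : ℂ) / 2) := by
  set N : ℂ := ((Real.cosh (ρ / 2) : ℝ) : ℂ) +
    Complex.exp (-2 * Complex.I * (φ : ℂ)) * ((Real.sinh (ρ / 2) : ℝ) : ℂ)
  have hNre : 0 < N.re := by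
    convert re_cosh_add_exp_mul_I_mul_sinh_pos (ρ / 2) (-2 * φ) using 5
    push_cast
    ring
  have hconj : ((Real.cosh (ρ / 2) : ℝ) : ℂ) +
      Complex.exp (2 * Complex.I * (φ : ℂ)) * ((Real.sinh (ρ / 2) : ℝ) : ℂ) = conj N := by
    simp only [N, map_add, map_mul, map_neg, map_ofNat, conj_I, conj_ofReal, ← exp_conj]
    ring_nf
  have hrow : exp (φ * I) * N = ((√y)⁻¹ : ℝ) * exp (θ * I) := by
    have hsqrt : √(Real.exp (-ρ)) = Real.exp (-(ρ / 2)) := by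
      rw [← Real.exp_half]
      ring_nf
    have h := bottom_row_of_kM_mul_aM_eq hEq
    rwa [hsqrt, div_eq_mul_inv, ← Real.exp_neg, neg_neg, mul_comm (Real.cos φ),
      ← exp_mul_I_mul_cosh_add_exp_mul_I_mul_sinh] at h
  have hw : exp (φ * I) * N ≠ 0 := mul_ne_zero (exp_ne_zero _) (ne_zero_of_re_pos hNre)
  rw [hconj, cpow_one_half_div_conj hNre, exp_mul_I_eq_div_norm hw (by positivity) hrow,
    norm_mul, norm_exp_ofReal_mul_I, one_mul, mul_div_assoc]

/-- If `k[φ] a[e^{-ρ}] = n[x] a[y] k[θ]` with `ρ > 0`, and `cosh ρ = 2u+1`, then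
`e^{iθ} = e^{iφ}((cosh(ρ/2)+e^{-2iφ}sinh(ρ/2))/(cosh(ρ/2)+e^{2iφ}sinh(ρ/2)))^{1/2}`,
the square root taken with the principal branch (Lean's `Complex.cpow`). -/
theorem stmt5 (φ ρ x y θ u : ℝ) (hρ : 0 < ρ) (hu : 0 ≤ u)
    (hcosh : Real.cosh ρ = 2 * u + 1) (hy : 0 < y)
    (hEq : kM φ * aM (Real.exp (-ρ)) = nM x * aM y * kM θ) :
    Complex.exp ((θ : ℂ) * Complex.I) =
      Complex.exp ((φ : ℂ) * Complex.I) *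
        ((((Real.cosh (ρ / 2) : ℝ) : ℂ) +
            Complex.exp (-2 * Complex.I * (φ : ℂ)) * ((Real.sinh (ρ / 2) : ℝ) : ℂ)) /
          (((Real.cosh (ρ / 2) : ℝ) : ℂ) +
            Complex.exp (2 * Complex.I * (φ : ℂ)) * ((Real.sinh (ρ / 2) : ℝ) : ℂ))) ^
          ((1 : ℂ) / 2) :=
  stmt5_general φ ρ x y θ hEq
end

section
/- For ℓ_1 ≡ ℓ_2 (mod 2), ν ∈ C, and u > 0 with cosh ρ = 2u+1 (ρ > 0), the projected function φ_{ℓ_1,ℓ_2}(a_u, ν) := (1/2π)∫_0^{2π} φ_{ℓ_2}(k[φ] a_u, ν) e^{−iℓ_1 φ} dφ equals (1/2π)∫_0^{2π} (cosh(ρ/2) + sinh(ρ/2)e^{iφ})^{−1/2−ν−ℓ_2/2} (cosh(ρ/2) + sinh(ρ/2)e^{−iφ})^{−1/2−ν+ℓ_2/2} e^{i(ℓ_2−ℓ_1)φ/2} dφ. -/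
open Matrix Complex Real

/-- The basic function `φ_ℓ(g,ν) = y^{1/2+ν} e^{iℓθ}` expressed through the bottom row
`(c,d)` of `g`: `y = 1/(c²+d²)` and `e^{iθ} = (d - ic)/√(c²+d²)`. -/
noncomputable def phiIw (ν : ℂ) (ℓ : ℤ) (g : Matrix (Fin 2) (Fin 2) ℝ) : ℂ :=
  (((g 1 0) ^ 2 + (g 1 1) ^ 2 : ℝ) : ℂ) ^ (-((1 : ℂ) / 2 + ν)) *
    ((((g 1 1 : ℝ) : ℂ) - Complex.I * ((g 1 0 : ℝ) : ℂ)) /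
      ((Real.sqrt ((g 1 0) ^ 2 + (g 1 1) ^ 2) : ℝ) : ℂ)) ^ ℓ

/-!
Put `z = cosh(ρ/2) + sinh(ρ/2) e^{2iφ}`. The bottom row `(c, d)` of `k[φ] a[e^{-ρ}]` satisfies
`d - ic = e^{iφ} z̄`, and `Re z ≥ cosh(ρ/2) - |sinh(ρ/2)| > 0`, so the principal powers of
`c² + d² = z z̄` and of `(d - ic)/|d - ic|` split into powers of `z` and `z̄` separately. Hence the
left-hand integrand at `φ` is the right-hand integrand at `2φ`. That integrand is `2π`-periodic
because `ℓ₁ ≡ ℓ₂ (mod 2)`, so the substitution `ψ = 2φ` leaves the mean over a period unchanged.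
-/

open ComplexConjugate

theorem Function.Periodic.intervalIntegral_comp_int_mul {E : Type*} [NormedAddCommGroup E]
    [NormedSpace ℝ E] {f : ℝ → E} {T : ℝ} (hf : Function.Periodic f T)
    (hint : ∀ a b, IntervalIntegrable f MeasureTheory.volume a b) {n : ℤ} (hn : n ≠ 0) :
    ∫ x in (0 : ℝ)..T, f (n * x) = ∫ x in (0 : ℝ)..T, f x := by
  have hn' : (n : ℝ) ≠ 0 := Int.cast_ne_zero.2 hn
  rw [intervalIntegral.integral_comp_mul_left f hn', mul_zero, ← zsmul_eq_mul,
    ← zero_add (n • T), hf.intervalIntegral_add_zsmul_eq n 0 hint, zero_add,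
    ← Int.cast_smul_eq_zsmul ℝ, smul_smul, inv_mul_cancel₀ hn', one_smul]

theorem Real.abs_sinh_lt_cosh (x : ℝ) : |Real.sinh x| < Real.cosh x :=
  abs_lt.2 ⟨by simpa [neg_lt] using Real.sinh_lt_cosh (-x), Real.sinh_lt_cosh x⟩

theorem Complex.ofReal_normSq_cpow_mul_zpow_conj_div_norm {z : ℂ} (hz : z ∈ slitPlane)
    (s : ℂ) (ℓ : ℤ) :
    ((normSq z : ℝ) : ℂ) ^ s * (conj z / (‖z‖ : ℂ)) ^ ℓ =
      z ^ (s - ℓ / 2) * conj z ^ (s + ℓ / 2) := by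
  have hz0 : z ≠ 0 := slitPlane_ne_zero hz
  have hlog_conj : log (conj z) = conj (log z) := log_conj z (slitPlane_arg_ne_pi hz)
  -- `log z + conj (log z) = 2 log ‖z‖` turns every factor into an exponential in `log z`
  have hsum : log z + conj (log z) = 2 * (Real.log ‖z‖ : ℂ) := by
    rw [add_conj, log_re]; push_cast; ring
  have hnormSq : ((normSq z : ℝ) : ℂ) ^ s = exp (2 * (Real.log ‖z‖ : ℂ) * s) := by
    rw [cpow_def_of_ne_zero (by exact_mod_cast (normSq_pos.2 hz0).ne'),
      ← ofReal_log (normSq_nonneg z), normSq_eq_norm_sq, Real.log_pow]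
    push_cast; ring_nf
  have hnorm : (‖z‖ : ℂ) = exp (Real.log ‖z‖) := by
    rw [← ofReal_exp, Real.exp_log (norm_pos_iff.2 hz0)]
  have hconj : conj z = exp (conj (log z)) := by rw [← hlog_conj, exp_log (by simpa using hz0)]
  rw [hnormSq, cpow_def_of_ne_zero hz0, cpow_def_of_ne_zero (by simpa using hz0), hlog_conj,
    hnorm, hconj, ← exp_sub, ← exp_int_mul, ← exp_add, ← exp_add]
  congr 1
  linear_combination (ℓ / 2 - s) * hsum

noncomputable def coshAddSinhExp (t ψ : ℝ) : ℂ :=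
  (Real.cosh t : ℂ) + (Real.sinh t : ℂ) * Complex.exp (I * ψ)

theorem conj_coshAddSinhExp (t ψ : ℝ) :
    conj (coshAddSinhExp t ψ) =
      (Real.cosh t : ℂ) + (Real.sinh t : ℂ) * Complex.exp (-I * ψ) := by
  simp only [coshAddSinhExp, map_add, map_mul, Complex.conj_ofReal, ← Complex.exp_conj,
    Complex.conj_I, neg_mul]

theorem coshAddSinhExp_re (t ψ : ℝ) :
    (coshAddSinhExp t ψ).re = Real.cosh t + Real.sinh t * Real.cos ψ := by
  simp [coshAddSinhExp, mul_comm I, Complex.exp_mul_I, ← Complex.ofReal_cos,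
    ← Complex.ofReal_sin, -Complex.ofReal_cosh, -Complex.ofReal_sinh]

theorem coshAddSinhExp_re_pos (t ψ : ℝ) : 0 < (coshAddSinhExp t ψ).re := by
  have : |Real.sinh t * Real.cos ψ| ≤ |Real.sinh t| := by
    rw [abs_mul]; exact mul_le_of_le_one_right (abs_nonneg _) (Real.abs_cos_le_one ψ)
  rw [coshAddSinhExp_re]
  linarith [neg_abs_le (Real.sinh t * Real.cos ψ), Real.abs_sinh_lt_cosh t]

theorem coshAddSinhExp_mem_slitPlane (t ψ : ℝ) : coshAddSinhExp t ψ ∈ slitPlane :=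
  Complex.mem_slitPlane_iff.2 (Or.inl (coshAddSinhExp_re_pos t ψ))

theorem exp_I_mul_conj_coshAddSinhExp (t φ : ℝ) :
    Complex.exp (I * φ) * conj (coshAddSinhExp t (2 * φ)) =
      (Real.exp t * Real.cos φ : ℝ) + I * (Real.exp (-t) * Real.sin φ : ℝ) := by
  have hsum : Complex.exp (I * φ) * Complex.exp (-I * ↑(2 * φ)) = Complex.exp (-φ * I) := by
    rw [← Complex.exp_add]; push_cast; ring_nf
  have h1 := Complex.exp_mul_I (φ : ℂ)
  have h2 := Complex.exp_mul_I (-φ : ℂ)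
  rw [Complex.cos_neg, Complex.sin_neg] at h2
  rw [conj_coshAddSinhExp, Real.cosh_eq, Real.sinh_eq, mul_add, mul_left_comm, hsum, mul_comm I,
    h1, h2]
  push_cast
  ring

theorem phiIw_eq_of_bottomRow {g : Matrix (Fin 2) (Fin 2) ℝ} {w : ℂ}
    (hw : ((g 1 1 : ℝ) : ℂ) - I * (g 1 0 : ℝ) = w) (ν : ℂ) (ℓ : ℤ) :
    phiIw ν ℓ g = ((normSq w : ℝ) : ℂ) ^ (-((1 : ℂ) / 2 + ν)) * (w / (‖w‖ : ℂ)) ^ ℓ := by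
  have hnormSq : normSq w = g 1 0 ^ 2 + g 1 1 ^ 2 := by
    rw [← hw, show ((g 1 1 : ℝ) : ℂ) - I * (g 1 0 : ℝ) = (g 1 1 : ℝ) + ((-g 1 0 : ℝ) : ℂ) * I by
      push_cast; ring, normSq_add_mul_I]
    ring
  rw [phiIw, ← hw, Complex.norm_def, hw, hnormSq]

theorem kM_mul_aM_apply_one_zero (φ y : ℝ) : (kM φ * aM y) 1 0 = -(Real.sin φ * √y) := by
  simp [kM, aM, Matrix.mul_apply, Fin.sum_univ_two]

theorem kM_mul_aM_apply_one_one (φ y : ℝ) : (kM φ * aM y) 1 1 = Real.cos φ / √y := by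
  simp [kM, aM, Matrix.mul_apply, Fin.sum_univ_two, div_eq_mul_inv]

theorem kM_mul_aM_exp_neg_bottomRow (ρ φ : ℝ) :
    (((kM φ * aM (Real.exp (-ρ))) 1 1 : ℝ) : ℂ) - I * ((kM φ * aM (Real.exp (-ρ))) 1 0 : ℝ) =
      Complex.exp (I * φ) * conj (coshAddSinhExp (ρ / 2) (2 * φ)) := by
  rw [exp_I_mul_conj_coshAddSinhExp, kM_mul_aM_apply_one_zero, kM_mul_aM_apply_one_one,
    ← Real.exp_half, div_eq_mul_inv, ← Real.exp_neg, neg_div, neg_neg, ofReal_neg, mul_neg,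
    sub_neg_eq_add, mul_comm (Real.cos φ), mul_comm (Real.sin φ)]

noncomputable def projIntegrand (ρ : ℝ) (ℓ₁ ℓ₂ : ℤ) (ν : ℂ) (ψ : ℝ) : ℂ :=
  (((Real.cosh (ρ / 2) : ℝ) : ℂ) +
      ((Real.sinh (ρ / 2) : ℝ) : ℂ) * Complex.exp (Complex.I * (ψ : ℂ))) ^
      (-(1 : ℂ) / 2 - ν - (ℓ₂ : ℂ) / 2) *
    (((Real.cosh (ρ / 2) : ℝ) : ℂ) +
      ((Real.sinh (ρ / 2) : ℝ) : ℂ) * Complex.exp (-Complex.I * (ψ : ℂ))) ^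
      (-(1 : ℂ) / 2 - ν + (ℓ₂ : ℂ) / 2) *
    Complex.exp (Complex.I * ((ℓ₂ : ℂ) - (ℓ₁ : ℂ)) / 2 * (ψ : ℂ))

theorem continuous_projIntegrand (ρ : ℝ) (ℓ₁ ℓ₂ : ℤ) (ν : ℂ) :
    Continuous (projIntegrand ρ ℓ₁ ℓ₂ ν) := by
  have hconj_mem (ψ : ℝ) : conj (coshAddSinhExp (ρ / 2) ψ) ∈ slitPlane :=
    mem_slitPlane_iff.2 (Or.inl (by rw [conj_re]; exact coshAddSinhExp_re_pos _ _))
  have hcont : Continuous (coshAddSinhExp (ρ / 2)) := by unfold coshAddSinhExp; fun_prop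
  refine ((hcont.cpow continuous_const fun ψ => coshAddSinhExp_mem_slitPlane _ ψ).mul
    (Continuous.cpow ?_ continuous_const fun ψ => conj_coshAddSinhExp (ρ / 2) ψ ▸ hconj_mem ψ)).mul
    ?_ <;> fun_prop

theorem periodic_projIntegrand {ℓ₁ ℓ₂ : ℤ} (hpar : ℓ₁ % 2 = ℓ₂ % 2) (ρ : ℝ) (ν : ℂ) :
    Function.Periodic (projIntegrand ρ ℓ₁ ℓ₂ ν) (2 * π) := by
  obtain ⟨m, hm⟩ : 2 ∣ ℓ₂ - ℓ₁ := by omega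
  have hmC : (ℓ₂ : ℂ) - ℓ₁ = 2 * m := by exact_mod_cast hm
  intro ψ
  have h₁ : Complex.exp (I * ↑(ψ + 2 * π)) = Complex.exp (I * ψ) :=
    Complex.exp_eq_exp_iff_exists_int.2 ⟨1, by push_cast; ring⟩
  have h₂ : Complex.exp (-I * ↑(ψ + 2 * π)) = Complex.exp (-I * ψ) :=
    Complex.exp_eq_exp_iff_exists_int.2 ⟨-1, by push_cast; ring⟩
  have h₃ : Complex.exp (I * (ℓ₂ - ℓ₁) / 2 * ↑(ψ + 2 * π)) =
      Complex.exp (I * (ℓ₂ - ℓ₁) / 2 * ψ) :=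
    Complex.exp_eq_exp_iff_exists_int.2 ⟨m, by rw [hmC]; push_cast; ring⟩
  simp only [projIntegrand, h₁, h₂, h₃]

theorem phiIw_kM_mul_aM_exp_neg_mul_exp (ρ : ℝ) (ℓ₁ ℓ₂ : ℤ) (ν : ℂ) (φ : ℝ) :
    phiIw ν ℓ₂ (kM φ * aM (Real.exp (-ρ))) * Complex.exp (-I * ℓ₁ * φ) =
      projIntegrand ρ ℓ₁ ℓ₂ ν (2 * φ) := by
  set z := coshAddSinhExp (ρ / 2) (2 * φ)
  have hnorm_exp : ‖Complex.exp (I * φ)‖ = 1 := by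
    rw [mul_comm]; exact Complex.norm_exp_ofReal_mul_I φ
  have hnormSq : normSq (Complex.exp (I * φ) * conj z) = normSq z := by
    rw [normSq_mul, normSq_conj, normSq_eq_norm_sq (Complex.exp _), hnorm_exp, one_pow, one_mul]
  have hnorm : ‖Complex.exp (I * φ) * conj z‖ = ‖z‖ := by
    rw [norm_mul, hnorm_exp, one_mul, Complex.norm_conj]
  rw [phiIw_eq_of_bottomRow (kM_mul_aM_exp_neg_bottomRow ρ φ), hnormSq, hnorm, mul_div_assoc,
    mul_zpow, mul_left_comm, ofReal_normSq_cpow_mul_zpow_conj_div_norm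
      (coshAddSinhExp_mem_slitPlane _ _), conj_coshAddSinhExp, ← exp_int_mul, projIntegrand]
  have hexp : Complex.exp (ℓ₂ * (I * φ)) * Complex.exp (-I * ℓ₁ * φ) =
      Complex.exp (I * (ℓ₂ - ℓ₁) / 2 * ↑(2 * φ)) := by
    rw [← Complex.exp_add]; push_cast; ring_nf
  rw [← hexp, show -((1 : ℂ) / 2 + ν) - ℓ₂ / 2 = -1 / 2 - ν - ℓ₂ / 2 by ring,
    show -((1 : ℂ) / 2 + ν) + ℓ₂ / 2 = -1 / 2 - ν + ℓ₂ / 2 by ring, coshAddSinhExp]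
  ring

theorem stmt10_general (ρ : ℝ) (ℓ₁ ℓ₂ : ℤ) (hpar : ℓ₁ % 2 = ℓ₂ % 2) (ν : ℂ) :
    (1 / (2 * (Real.pi : ℂ))) *
        ∫ φ in (0 : ℝ)..(2 * Real.pi),
          phiIw ν ℓ₂ (kM φ * aM (Real.exp (-ρ))) * Complex.exp (-Complex.I * (ℓ₁ : ℂ) * (φ : ℂ)) =
      (1 / (2 * (Real.pi : ℂ))) *
        ∫ φ in (0 : ℝ)..(2 * Real.pi),
          (((Real.cosh (ρ / 2) : ℝ) : ℂ) +
              ((Real.sinh (ρ / 2) : ℝ) : ℂ) * Complex.exp (Complex.I * (φ : ℂ))) ^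
              (-(1 : ℂ) / 2 - ν - (ℓ₂ : ℂ) / 2) *
            (((Real.cosh (ρ / 2) : ℝ) : ℂ) +
              ((Real.sinh (ρ / 2) : ℝ) : ℂ) * Complex.exp (-Complex.I * (φ : ℂ))) ^
              (-(1 : ℂ) / 2 - ν + (ℓ₂ : ℂ) / 2) *
            Complex.exp (Complex.I * ((ℓ₂ : ℂ) - (ℓ₁ : ℂ)) / 2 * (φ : ℂ)) := by
  have hint (a b : ℝ) :=
    (continuous_projIntegrand ρ ℓ₁ ℓ₂ ν).intervalIntegrable (μ := MeasureTheory.volume) a b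
  congr 1
  calc _ = ∫ φ in (0 : ℝ)..2 * π, projIntegrand ρ ℓ₁ ℓ₂ ν (2 * φ) :=
        intervalIntegral.integral_congr fun φ _ => phiIw_kM_mul_aM_exp_neg_mul_exp ρ ℓ₁ ℓ₂ ν φ
    _ = ∫ ψ in (0 : ℝ)..2 * π, projIntegrand ρ ℓ₁ ℓ₂ ν ψ := by
        exact_mod_cast (periodic_projIntegrand hpar ρ ν).intervalIntegral_comp_int_mul hint
          (n := 2) two_ne_zero

/-- The integral formula of Lemma `phirewritten`: for `ℓ₁ ≡ ℓ₂ (mod 2)`,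
`cosh ρ = 2u+1`, `ρ, u > 0`, the projection
`φ_{ℓ₁,ℓ₂}(a_u,ν) = (1/2π)∫₀^{2π} φ_{ℓ₂}(k[φ]a_u,ν)e^{-iℓ₁φ}dφ` equals
`(1/2π)∫₀^{2π}(cosh(ρ/2)+sinh(ρ/2)e^{iφ})^{-1/2-ν-ℓ₂/2}(cosh(ρ/2)+sinh(ρ/2)e^{-iφ})^{-1/2-ν+ℓ₂/2} e^{i(ℓ₂-ℓ₁)φ/2}dφ`. -/
theorem stmt10 (u ρ : ℝ) (hu : 0 < u) (hρ : 0 < ρ) (hcosh : Real.cosh ρ = 2 * u + 1)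
    (ℓ₁ ℓ₂ : ℤ) (hpar : ℓ₁ % 2 = ℓ₂ % 2) (ν : ℂ) :
    (1 / (2 * (Real.pi : ℂ))) *
        ∫ φ in (0 : ℝ)..(2 * Real.pi),
          phiIw ν ℓ₂ (kM φ * aM (Real.exp (-ρ))) * Complex.exp (-Complex.I * (ℓ₁ : ℂ) * (φ : ℂ)) =
      (1 / (2 * (Real.pi : ℂ))) *
        ∫ φ in (0 : ℝ)..(2 * Real.pi),
          (((Real.cosh (ρ / 2) : ℝ) : ℂ) +
              ((Real.sinh (ρ / 2) : ℝ) : ℂ) * Complex.exp (Complex.I * (φ : ℂ))) ^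
              (-(1 : ℂ) / 2 - ν - (ℓ₂ : ℂ) / 2) *
            (((Real.cosh (ρ / 2) : ℝ) : ℂ) +
              ((Real.sinh (ρ / 2) : ℝ) : ℂ) * Complex.exp (-Complex.I * (φ : ℂ))) ^
              (-(1 : ℂ) / 2 - ν + (ℓ₂ : ℂ) / 2) *
            Complex.exp (Complex.I * ((ℓ₂ : ℂ) - (ℓ₁ : ℂ)) / 2 * (φ : ℂ)) :=
  stmt10_general ρ ℓ₁ ℓ₂ hpar ν
end
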